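/- Let G be a finite connected bipartite simple graph with bipartition (X, Y) and at least one edge, and let f be a like-geometric product set-labeling of G with common characteristic index k such that for every edge uv with u ∈ X and v ∈ Y one has r_v = r_u^k (i.e., X is the side of smaller common ratios). Then f is both strong and uniform (a strongly uniform product set-labeling) if and only if |f(u)| = k for every vertex u ∈ X and the cardinality |f(v)| is constant for v ∈ Y. -/

import Mathlib

open Pointwise

/-- A finite set of positive integers is a geometric progression (with integer first term
`a > 0` and integer common ratio `r ≥ 2`). -/
def IsGeomProg (A : Finset ℕ) : Prop :=
  ∃ a r : ℕ, 0 < a ∧ 2 ≤ r ∧ A = (Finset.range A.card).image (fun i => a * r ^ i)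

open Finset

/-!
On an edge `uv` with `u ∈ X`, write `f u = a·{r^i : i < m}` and `f v = b·{(r^k)^j : j < n}`.
Then `f u ∗ f v = ab·{r^e : e ∈ E}` with `E = {i + k j : i < m, j < n}`, and `e ↦ ab·r^e` is
injective, so everything is decided by the exponent set `E`. The labeling is strong on `uv` iff
the representation `e = i + k j` is unique, which forces `m ≤ k` (otherwise `k + k·0 = 0 + k·1`).
The edge label is a geometric progression iff `E` is an initial segment `{0, …, N-1}` (its two
smallest elements `ab` and `ab·r` pin down the first term and the ratio), and since `k ∈ E` this
forces `k ≤ m`. Conversely, for `m = k` the exponents `i + k j` are exactly the base-`k` expansions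
of `0, …, kn - 1`, so `|f u ∗ f v| = k·|f v|`, and bipartiteness makes this the cardinality of
every edge label once `|f v|` is constant on the side of `v`.
-/

def geomProg (a r n : ℕ) : Finset ℕ := (range n).image fun i => a * r ^ i

def productExponents (k m n : ℕ) : Finset ℕ :=
  (range m ×ˢ range n).image fun p => p.1 + k * p.2

lemma Nat.mul_pow_right_injective {c r : ℕ} (hc : 0 < c) (hr : 2 ≤ r) :
    Function.Injective fun e => c * r ^ e :=
  (mul_right_injective₀ hc.ne').comp (Nat.pow_right_injective hr)

lemma mem_productExponents {k m n i j : ℕ} (hi : i < m) (hj : j < n) :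
    i + k * j ∈ productExponents k m n :=
  mem_image.2 ⟨(i, j), mem_product.2 ⟨mem_range.2 hi, mem_range.2 hj⟩, rfl⟩

lemma geomProg_mul_geomProg_pow (a b r k m n : ℕ) :
    geomProg a r m * geomProg b (r ^ k) n =
      (productExponents k m n).image fun e => a * b * r ^ e := by
  ext x
  simp only [geomProg, productExponents, image_image, mem_mul, mem_image, mem_product, mem_range,
    Function.comp_apply]
  constructor
  · rintro ⟨_, ⟨i, hi, rfl⟩, _, ⟨j, hj, rfl⟩, rfl⟩
    exact ⟨(i, j), ⟨hi, hj⟩, by rw [pow_add, pow_mul]; ring⟩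
  · rintro ⟨⟨i, j⟩, ⟨hi, hj⟩, rfl⟩
    exact ⟨_, ⟨i, hi, rfl⟩, _, ⟨j, hj, rfl⟩, by rw [pow_add, pow_mul]; ring⟩

lemma card_geomProg_mul_geomProg_pow {a b r : ℕ} (ha : 0 < a) (hb : 0 < b) (hr : 2 ≤ r)
    (k m n : ℕ) : #(geomProg a r m * geomProg b (r ^ k) n) = #(productExponents k m n) := by
  rw [geomProg_mul_geomProg_pow,
    card_image_of_injective _ (Nat.mul_pow_right_injective (by positivity) hr)]

lemma productExponents_self {k : ℕ} (hk : 0 < k) (n : ℕ) :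
    productExponents k k n = range (k * n) := by
  ext e
  simp only [productExponents, mem_image, mem_product, mem_range]
  constructor
  · rintro ⟨⟨i, j⟩, ⟨hi, hj⟩, rfl⟩
    calc i + k * j < k + k * j := by omega
      _ = k * (j + 1) := by ring
      _ ≤ k * n := Nat.mul_le_mul_left k hj
  · intro he
    exact ⟨(e % k, e / k), ⟨Nat.mod_lt _ hk, Nat.div_lt_of_lt_mul he⟩, Nat.mod_add_div e k⟩

lemma le_of_card_productExponents {k m n : ℕ} (hn : 1 < n)
    (h : #(productExponents k m n) = m * n) : m ≤ k := by
  by_contra! hkm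
  have hinj : Set.InjOn (fun p : ℕ × ℕ => p.1 + k * p.2) ↑(range m ×ˢ range n) := by
    apply injOn_of_card_image_eq
    rw [← productExponents, h, card_product, card_range, card_range]
  have := @hinj (k, 0) (by simp; omega) (0, 1) (by simp; omega) (by simp)
  simp at this

lemma le_of_productExponents_eq_range {k m n N : ℕ} (hm : 0 < m) (hn : 1 < n)
    (h : productExponents k m n = range N) : k ≤ m := by
  by_contra! hmk
  have hkN : k < N := mem_range.1 (h ▸ by simpa using mem_productExponents (k := k) hm hn)
  obtain ⟨⟨i, j⟩, hij, hm_eq⟩ := mem_image.1 (h ▸ mem_range.2 (hmk.trans hkN))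
  simp only [mem_product, mem_range] at hij
  simp only at hm_eq
  have : k ≤ k * j := Nat.le_mul_of_pos_right k (Nat.pos_of_ne_zero (by rintro rfl; omega))
  omega

lemma le_of_mem_image_mul_pow {a ρ x : ℕ} {F : Finset ℕ} (hρ : 0 < ρ)
    (hx : x ∈ F.image fun t => a * ρ ^ t) : a ≤ x := by
  obtain ⟨t, -, rfl⟩ := mem_image.1 hx
  exact Nat.le_mul_of_pos_right a (pow_pos hρ t)

lemma le_of_mul_mem_image_mul_pow {c r ρ : ℕ} {F : Finset ℕ} (hc : 0 < c) (hr : 2 ≤ r)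
    (h : c * r ∈ F.image fun t => c * ρ ^ t) : ρ ≤ r := by
  obtain ⟨t, -, ht⟩ := mem_image.1 h
  have ht : ρ ^ t = r := Nat.eq_of_mul_eq_mul_left hc ht
  have : t ≠ 0 := by rintro rfl; rw [pow_zero] at ht; omega
  exact ht ▸ Nat.le_self_pow this ρ

lemma eq_range_of_isGeomProg_image {c r : ℕ} {E : Finset ℕ} (hc : 0 < c) (hr : 2 ≤ r)
    (h0 : 0 ∈ E) (h1 : 1 ∈ E) (hg : IsGeomProg (E.image fun e => c * r ^ e)) :
    E = range #E := by
  obtain ⟨a, ρ, ha, hρ, hP⟩ := hg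
  rw [card_image_of_injective _ (Nat.mul_pow_right_injective hc hr)] at hP
  have hE : 1 < #E := one_lt_card.2 ⟨0, h0, 1, h1, zero_ne_one⟩
  have mem_P : ∀ e ∈ E, c * r ^ e ∈ (range #E).image fun t => a * ρ ^ t :=
    fun e he => hP ▸ mem_image_of_mem _ he
  have mem_E : ∀ t < #E, a * ρ ^ t ∈ E.image fun e => c * r ^ e :=
    fun t ht => hP ▸ mem_image_of_mem _ (mem_range.2 ht)
  have hac : a = c := le_antisymm
    (le_of_mem_image_mul_pow (by omega : 0 < ρ)
      (by simpa only [pow_zero, mul_one] using mem_P 0 h0))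
    (le_of_mem_image_mul_pow (by omega : 0 < r)
      (by simpa only [pow_zero, mul_one] using mem_E 0 (by omega)))
  subst hac
  have hρr : ρ = r := le_antisymm
    (le_of_mul_mem_image_mul_pow ha hr (by simpa only [pow_one] using mem_P 1 h1))
    (le_of_mul_mem_image_mul_pow ha hρ (by simpa only [pow_one] using mem_E 1 hE))
  subst hρr
  exact image_injective (Nat.mul_pow_right_injective ha hr) hP

lemma eq_of_isGeomProg_of_card_mul_eq {a b r k m n : ℕ} (ha : 0 < a) (hb : 0 < b) (hr : 2 ≤ r)
    (hm : 2 ≤ m) (hn : 2 ≤ n) (hg : IsGeomProg (geomProg a r m * geomProg b (r ^ k) n))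
    (hs : #(geomProg a r m * geomProg b (r ^ k) n) = m * n) : m = k := by
  rw [card_geomProg_mul_geomProg_pow ha hb hr] at hs
  rw [geomProg_mul_geomProg_pow] at hg
  have hrange := eq_range_of_isGeomProg_image (by positivity) hr
    (by simpa using mem_productExponents (k := k) (by omega : 0 < m) (by omega : 0 < n))
    (by simpa using mem_productExponents (k := k) (by omega : 1 < m) (by omega : 0 < n)) hg
  exact le_antisymm (le_of_card_productExponents hn hs)
    (le_of_productExponents_eq_range (by omega) hn hrange)

lemma card_geomProg_mul_geomProg_pow_self {a b r k : ℕ} (ha : 0 < a) (hb : 0 < b) (hr : 2 ≤ r)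
    (hk : 0 < k) (n : ℕ) : #(geomProg a r k * geomProg b (r ^ k) n) = k * n := by
  rw [card_geomProg_mul_geomProg_pow ha hb hr, productExponents_self hk, card_range]

namespace SimpleGraph

variable {V : Type*} {G : SimpleGraph V}

lemma Connected.exists_adj (hconn : G.Connected) (hedge : ∃ u v, G.Adj u v) (u : V) :
    ∃ w, G.Adj u w := by
  obtain ⟨x, y, hxy⟩ := hedge
  have := hxy.nontrivial
  exact hconn.preconnected.exists_adj_of_nontrivial u

lemma forall_adj_of_forall_adj_mem {X : Set V} (hcover : ∀ u v, G.Adj u v → u ∈ X ∨ v ∈ X)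
    {P : V → V → Prop} (hP : ∀ u v, P u v → P v u)
    (h : ∀ u v, G.Adj u v → u ∈ X → P u v) (u v : V) (huv : G.Adj u v) : P u v :=
  (hcover u v huv).elim (h u v huv) fun hv => hP v u (h v u huv.symm hv)

end SimpleGraph

theorem likeGeometric_stronglyUniform_iff_general {V : Type*}
    (G : SimpleGraph V) (hconn : G.Connected) (hedge : ∃ u v, G.Adj u v)
    (X : Set V) (hbip : ∀ u v, G.Adj u v → (u ∈ X ↔ v ∉ X))
    (f : V → Finset ℕ) (rv av : V → ℕ) (k : ℕ)
    (hr : ∀ v, 2 ≤ rv v) (ha : ∀ v, 0 < av v) (hcard : ∀ v, 2 ≤ (f v).card)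
    (hgp : ∀ v, f v = (Finset.range (f v).card).image (fun i => av v * (rv v) ^ i))
    (hgeom : ∀ u v, G.Adj u v → IsGeomProg (f u * f v))
    (hk : 1 < k)
    (hchar : ∀ u v, G.Adj u v → u ∈ X → rv v = (rv u) ^ k) :
    ((∀ u v, G.Adj u v → (f u * f v).card = (f u).card * (f v).card) ∧
      (∃ c : ℕ, ∀ u v, G.Adj u v → (f u * f v).card = c)) ↔
      ((∀ u ∈ X, (f u).card = k) ∧
        (∀ v ∉ X, ∀ v' ∉ X, (f v).card = (f v').card)) := by
  have hprod : ∀ u v, G.Adj u v → u ∈ X →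
      f u * f v = geomProg (av u) (rv u) #(f u) * geomProg (av v) (rv u ^ k) #(f v) := by
    intro u v huv hu
    rw [← hchar u v huv hu]
    exact congrArg₂ (· * ·) (hgp u) (hgp v)
  have hcard_mul : ∀ u v, G.Adj u v → u ∈ X → #(f u) = k → #(f u * f v) = k * #(f v) := by
    intro u v huv hu hku
    rw [hprod u v huv hu, hku, card_geomProg_mul_geomProg_pow_self (ha u) (ha v) (hr u) (by omega)]
  constructor
  · rintro ⟨hstrong, c, hunif⟩
    have hX : ∀ u ∈ X, #(f u) = k := fun u hu => by
      obtain ⟨w, huw⟩ := hconn.exists_adj hedge u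
      have hg := hgeom u w huw
      have hs := hstrong u w huw
      rw [hprod u w huw hu] at hg hs
      exact eq_of_isGeomProg_of_card_mul_eq (ha u) (ha w) (hr u) (hcard u) (hcard w) hg hs
    have hc : ∀ v ∉ X, k * #(f v) = c := fun v hv => by
      obtain ⟨u, hvu⟩ := hconn.exists_adj hedge v
      have hu : u ∈ X := (hbip u v hvu.symm).2 hv
      rw [← hcard_mul u v hvu.symm hu (hX u hu), hunif u v hvu.symm]
    exact ⟨hX, fun v hv v' hv' =>
      Nat.eq_of_mul_eq_mul_left (by omega) ((hc v hv).trans (hc v' hv').symm)⟩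
  · rintro ⟨hX, hY⟩
    obtain ⟨x, y, hxy⟩ := hedge
    obtain ⟨w, hw⟩ : ∃ w, w ∉ X :=
      (em (x ∈ X)).elim (fun hx => ⟨y, (hbip x y hxy).1 hx⟩) fun hx => ⟨x, hx⟩
    have hcover : ∀ u v, G.Adj u v → u ∈ X ∨ v ∈ X :=
      fun u v huv => or_iff_not_imp_right.2 (hbip u v huv).2
    refine ⟨G.forall_adj_of_forall_adj_mem hcover
        (fun u v h => by rw [mul_comm, h, Nat.mul_comm]) fun u v huv hu => ?_,
      k * #(f w), G.forall_adj_of_forall_adj_mem hcover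
        (fun u v h => by rw [mul_comm, h]) fun u v huv hu => ?_⟩
    · rw [hcard_mul u v huv hu (hX u hu), hX u hu]
    · rw [hcard_mul u v huv hu (hX u hu), hY v ((hbip u v huv).1 hu) w hw]

/-- Let `G` be a finite connected bipartite simple graph with
bipartition `(X, Xᶜ)` and at least one edge, and let `f` be a like-geometric product
set-labeling of `G` with common characteristic index `k` such that for every edge `uv`
with `u ∈ X` one has `rv v = (rv u)^k` (so `X` is the side of smaller common ratios).
Then `f` is both strong and uniform iff `|f u| = k` for every `u ∈ X` and the label
cardinality is constant on `Xᶜ`. -/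
theorem likeGeometric_stronglyUniform_iff {V : Type*} [Fintype V]
    (G : SimpleGraph V) (hconn : G.Connected) (hedge : ∃ u v, G.Adj u v)
    (X : Set V) (hbip : ∀ u v, G.Adj u v → (u ∈ X ↔ v ∉ X))
    (f : V → Finset ℕ) (rv av : V → ℕ) (k : ℕ)
    (hinj : Function.Injective f)
    (hr : ∀ v, 2 ≤ rv v) (ha : ∀ v, 0 < av v) (hcard : ∀ v, 2 ≤ (f v).card)
    (hgp : ∀ v, f v = (Finset.range (f v).card).image (fun i => av v * (rv v) ^ i))
    (hgeom : ∀ u v, G.Adj u v → IsGeomProg (f u * f v))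
    (hk : 1 < k)
    (hchar : ∀ u v, G.Adj u v → u ∈ X → rv v = (rv u) ^ k) :
    ((∀ u v, G.Adj u v → (f u * f v).card = (f u).card * (f v).card) ∧
      (∃ c : ℕ, ∀ u v, G.Adj u v → (f u * f v).card = c)) ↔
      ((∀ u ∈ X, (f u).card = k) ∧
        (∀ v ∉ X, ∀ v' ∉ X, (f v).card = (f v').card)) :=
  likeGeometric_stronglyUniform_iff_general G hconn hedge X hbip f rv av k hr ha hcard hgp hgeom hk
    hchar
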